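/- arXiv:1501.00248 — 2 statements merged into one kernel-verified Lean document; each statement's English description precedes it below -/
import Mathlib

section
/- Let R be a commutative ring, M ≥ 1 an integer, and R = I_0 ⊇ I_1 ⊇ I_2 ⊇ ⋯ ⊇ I_M a descending chain of ideals of R. Let 𝓘 ⊆ R[t] be the flag ideal 𝓘 = I_M + I_{M−1}·t + ⋯ + I_1·t^{M−1} + (t^M), i.e. the ideal of R[t] generated by t^M together with all elements a·t^{M−j} with a ∈ I_j, 1 ≤ j ≤ M. Then for every integer p ≥ 1, the p-th power satisfies 𝓘^p = Ĩ_{Mp} + Ĩ_{Mp−1}·t + ⋯ + Ĩ_1·t^{Mp−1} + (t^{Mp}), where for 0 ≤ j ≤ Mp one defines Ĩ_j := Σ I_{j_1}·I_{j_2}⋯I_{j_p}, the sum ranging over all tuples (j_1,…,j_p) of integers with 0 ≤ j_1,…,j_p ≤ M and j_1 + ⋯ + j_p = j (with I_0 = R). -/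
/-!
With `I 0 = ⊤`, the flag ideal is the sum `∑_{j=0}^{M} I_j R[t] · t^{M-j}` in the commutative
semiring of ideals of `R[t]`. Its `p`-th power expands into the sum, over all
`f : Fin p → [0, M]`, of `(∏ i, I_{f i}) R[t] · t^{Mp - ∑ i, f i}`; grouping the terms by
`∑ i, f i` gives the flag ideal of the ideals `Ĩ_j`, which again satisfy `Ĩ_0 = ⊤`.
-/

open Polynomial

/-- The flag ideal `I_M + I_{M-1} t + ⋯ + I_1 t^{M-1} + (t^M)` in `R[t]` associated to a
chain of ideals `I 1 ⊇ ⋯ ⊇ I M` of `R`: the ideal generated by `t^M` together with all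
elements `a * t^(M - j)` with `a ∈ I j`, `1 ≤ j ≤ M`. -/
noncomputable def flagIdeal {R : Type*} [CommRing R] (M : ℕ) (I : ℕ → Ideal R) : Ideal (Polynomial R) :=
  Ideal.span ({Polynomial.X ^ M} ∪
    ⋃ j ∈ Finset.Icc 1 M, (fun a : R => Polynomial.C a * Polynomial.X ^ (M - j)) '' (I j : Set R))

open Finset Fintype Ideal

theorem Fin.sum_const_tsub {p M : ℕ} (f : Fin p → ℕ) (hf : ∀ i, f i ≤ M) :
    ∑ i, (M - f i) = M * p - ∑ i, f i := by
  rw [sum_tsub_distrib _ fun i _ => hf i, sum_const, smul_eq_mul, mul_comm]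

section

variable {R : Type*} [CommRing R]

theorem Ideal.span_image_C_mul_X_pow (A : Ideal R) (n : ℕ) :
    span ((fun a => C a * X ^ n) '' (A : Set R)) = A.map C * span {X ^ n} := by
  rw [Ideal.map, span_mul_span', Set.mul_singleton, Set.image_image]

theorem Ideal.prod_map_C_mul_span_X_pow {ι : Type*} (s : Finset ι) (A : ι → Ideal R)
    (n : ι → ℕ) :
    ∏ i ∈ s, (A i).map C * span {X ^ n i} =
      (∏ i ∈ s, A i).map (C : R →+* R[X]) * span {X ^ ∑ i ∈ s, n i} := by
  rw [prod_mul_distrib, prod_span_singleton, prod_pow_eq_pow_sum]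
  exact congrArg (· * _) (map_prod (mapHom C) A s).symm

theorem Ideal.sum_filter_piFinset_eq_iSup (M p k : ℕ) (g : (Fin p → ℕ) → Ideal R) :
    ∑ f ∈ piFinset (fun _ : Fin p => range (M + 1)) with ∑ i, f i = k, g f =
      ⨆ f : {f : Fin p → ℕ // (∀ i, f i ≤ M) ∧ ∑ i, f i = k}, g f.1 := by
  simp only [sum_eq_sup, Finset.sup_eq_iSup, iSup_subtype, mem_filter, mem_piFinset, mem_range,
    Nat.lt_succ_iff]

theorem flagIdeal_eq_sum (M : ℕ) (I : ℕ → Ideal R) (hI0 : I 0 = ⊤) :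
    flagIdeal M I = ∑ j ∈ range (M + 1), (I j).map C * span {X ^ (M - j)} := by
  simp_rw [flagIdeal, span_union, Ideal.span_iUnion, span_image_C_mul_X_pow]
  have hrange : range (M + 1) = insert 0 (Icc 1 M) := by ext; simp; omega
  rw [hrange, sum_insert (by simp), sum_eq_sup, Finset.sup_eq_iSup, hI0, Ideal.map_top,
    one_eq_top.symm, one_mul, Nat.sub_zero, Submodule.add_eq_sup]

end

theorem flagIdeal_pow_general {R : Type*} [CommRing R] (M : ℕ) (I : ℕ → Ideal R)
    (hI0 : I 0 = ⊤) (p : ℕ) :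
    (flagIdeal M I) ^ p =
      flagIdeal (M * p) (fun j =>
        ⨆ f : {f : Fin p → ℕ // (∀ i, f i ≤ M) ∧ ∑ i, f i = j},
          ∏ i : Fin p, I (f.1 i)) := by
  have hĨ0 :
      (⨆ f : {f : Fin p → ℕ // (∀ i, f i ≤ M) ∧ ∑ i, f i = 0}, ∏ i, I (f.1 i)) = ⊤ :=
    eq_top_iff.2 <| le_iSup_of_le ⟨0, by simp⟩ (by simp [hI0])
  have hsum_mem :
      ∀ f ∈ piFinset fun _ : Fin p => range (M + 1), ∑ i, f i ∈ range (M * p + 1) := by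
    intro f hf
    simp only [mem_piFinset, mem_range, Nat.lt_succ_iff] at hf ⊢
    simpa [mul_comm] using sum_le_card_nsmul univ f M fun i _ => hf i
  rw [flagIdeal_eq_sum M I hI0, flagIdeal_eq_sum _ _ hĨ0, sum_pow',
    ← sum_fiberwise_of_maps_to hsum_mem]
  refine sum_congr rfl fun k _ => ?_
  rw [← sum_filter_piFinset_eq_iSup M p k fun f => ∏ i, I (f i), ← mapHom_apply, map_sum,
    sum_mul]
  refine sum_congr rfl fun f hf => ?_
  simp only [mem_filter, mem_piFinset, mem_range, Nat.lt_succ_iff] at hf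
  rw [prod_map_C_mul_span_X_pow, Fin.sum_const_tsub f hf.1, hf.2, mapHom_apply]

/-- Lemma 4.1(1) of the paper (algebraic content): for a flag ideal
`𝓘 = I_M + I_{M-1} t + ⋯ + I_1 t^{M-1} + (t^M)` associated to a descending chain
`R = I_0 ⊇ I_1 ⊇ ⋯ ⊇ I_M`, its `p`-th power is the flag ideal
`Ĩ_{Mp} + Ĩ_{Mp-1} t + ⋯ + Ĩ_1 t^{Mp-1} + (t^{Mp})`, where
`Ĩ_j = ∑_{j_1 + ⋯ + j_p = j, 0 ≤ j_i ≤ M} I_{j_1} ⋯ I_{j_p}`. -/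
theorem flagIdeal_pow {R : Type*} [CommRing R] (M : ℕ) (hM : 1 ≤ M) (I : ℕ → Ideal R)
    (hI0 : I 0 = ⊤) (hchain : ∀ j : ℕ, j < M → I (j + 1) ≤ I j) (p : ℕ) (hp : 1 ≤ p) :
    (flagIdeal M I) ^ p =
      flagIdeal (M * p) (fun j =>
        ⨆ f : {f : Fin p → ℕ // (∀ i, f i ≤ M) ∧ ∑ i, f i = j},
          ∏ i : Fin p, I (f.1 i)) :=
  flagIdeal_pow_general M I hI0 p
end

section
/- Let k ≥ 1 be an integer, set N := 2k+1, and let c > 0 be a real number. The function ℂ^N → ℝ given by (z_1,…,z_N) ↦ ∏_{1≤i<j≤N} |z_i − z_j|^{−2c/k} is integrable (with respect to Lebesgue measure on ℂ^N ≅ ℝ^{2N}) on some neighborhood of the origin if and only if c < 2k/(2k+1). -/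
/-!
Put `a = 2c/k` and consider `N = n + 1` points in a real vector space `E` of dimension `d`
(here `E = ℂ`, `d = 2`, `n = 2k`); the claim becomes: `∏_{i<j} ‖z_i - z_j‖^{-a}` is integrable
near `0` iff `aN < 2d`. The function is invariant under translation along the diagonal, so the
shear `z_j = w`, `z_{j.succAbove i} = w + v_i` (which preserves Lebesgue measure) makes it a
function of `v ∈ E^n` alone.

If `aN < 2d`: by AM–GM the function is at most the average over `j` of the star products
`∏_{i ≠ j} ‖z_i - z_j‖^{-aN/2}`, and the shear centred at `z_j` turns each of these into
`∏_i ‖v_i‖^{-aN/2}`, a product of integrable functions since `aN/2 < d`.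

If `aN ≥ 2d`: all `N(N-1)/2` distances are at most `2‖v‖`, so the function is bounded below by a
multiple of `‖v‖^{-aN(N-1)/2}`, which is not integrable near `0` in `E^n`, of dimension
`nd ≤ aN(N-1)/2`. Both integrability criteria for `‖x‖^{-s}` come from polar coordinates.
-/

open MeasureTheory Metric Finset Set Filter Topology

theorem Fin.prod_prod_succAbove {M : Type*} [CommMonoid M] {n : ℕ}
    (g : Fin (n + 1) → Fin (n + 1) → M) :
    ∏ j, ∏ i : Fin n, g (j.succAbove i) j = ∏ i, ∏ j ∈ Ioi i, g i j * g j i := by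
  have hsplit : ∀ j, ∏ i : Fin n, g (j.succAbove i) j =
      (∏ i ∈ Ioi j, g i j) * ∏ i ∈ Iio j, g i j := fun j => by
    rw [← prod_disjUnion (disjoint_Ioi_Iio j), Ioi_disjUnion_Iio, ← Fin.image_succAbove_univ,
      prod_image fun _ _ _ _ h => Fin.succAbove_right_injective h]
  have hcomm : ∏ j, ∏ i ∈ Iio j, g i j = ∏ i, ∏ j ∈ Ioi i, g i j :=
    prod_comm' fun _ _ => by simp
  simp only [hsplit, prod_mul_distrib, hcomm, mul_comm]

theorem Fin.sum_card_Ioi (n : ℕ) : ∑ i : Fin n, #(Ioi i) = n.choose 2 := by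
  induction n with
  | zero => rfl
  | succ n ih =>
    rw [Fin.sum_univ_succ, Nat.choose_succ_succ, Nat.choose_one_right, ← ih]
    simp only [Fin.card_Ioi, Fin.val_zero, Fin.val_succ, Nat.add_sub_cancel, Nat.sub_zero]
    exact congr_arg _ (sum_congr rfl fun i _ => by omega)

section Weights

variable {E : Type*} [NormedAddCommGroup E] {n : ℕ}

noncomputable def vandermondeRpow (a : ℝ) (z : Fin n → E) : ℝ :=
  ∏ i, ∏ j ∈ Ioi i, ‖z i - z j‖ ^ (-a)

noncomputable def starRpow (s : ℝ) (j : Fin (n + 1)) (z : Fin (n + 1) → E) : ℝ :=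
  ∏ i : Fin n, ‖z (j.succAbove i) - z j‖ ^ (-s)

theorem starRpow_nonneg (s : ℝ) (j : Fin (n + 1)) (z : Fin (n + 1) → E) : 0 ≤ starRpow s j z :=
  prod_nonneg fun _ _ => by positivity

theorem vandermondeRpow_nonneg (a : ℝ) (z : Fin n → E) : 0 ≤ vandermondeRpow a z :=
  prod_nonneg fun _ _ => prod_nonneg fun _ _ => by positivity

theorem prod_starRpow_rpow (a : ℝ) (z : Fin (n + 1) → E) :
    ∏ j, starRpow (a * (n + 1) / 2) j z ^ ((n + 1 : ℝ)⁻¹) = vandermondeRpow a z := by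
  have hsq : ∀ x : ℝ, 0 ≤ x → x ^ (-(a / 2)) * x ^ (-(a / 2)) = x ^ (-a) := fun x hx => by
    rw [← sq, ← Real.rpow_natCast, ← Real.rpow_mul hx]
    ring_nf
  have hroot : ∀ x : ℝ, 0 ≤ x → (x ^ (-(a * (n + 1) / 2))) ^ ((n + 1 : ℝ)⁻¹) = x ^ (-(a / 2)) :=
    fun x hx => by
      rw [← Real.rpow_mul hx]
      field_simp
  simp only [starRpow, vandermondeRpow]
  simp_rw [← Real.finsetProd_rpow _ _ (fun _ _ => Real.rpow_nonneg (norm_nonneg _) _),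
    hroot _ (norm_nonneg _)]
  rw [Fin.prod_prod_succAbove (fun i j => ‖z i - z j‖ ^ (-(a / 2)))]
  simp_rw [norm_sub_rev (z _) (z _), hsq _ (norm_nonneg _)]

theorem vandermondeRpow_le_sum_starRpow (a : ℝ) (z : Fin (n + 1) → E) :
    vandermondeRpow a z ≤ ∑ j, (n + 1 : ℝ)⁻¹ * starRpow (a * (n + 1) / 2) j z := by
  rw [← prod_starRpow_rpow]
  refine Real.geom_mean_le_arith_mean_weighted _ _ _ (fun _ _ => by positivity) ?_
    (fun j _ => starRpow_nonneg _ j z)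
  simp [mul_inv_cancel₀ (by positivity : (n + 1 : ℝ) ≠ 0)]

-- Injectivity matters: `Real.rpow` gives `0 ^ (-a) = 0` for `a ≠ 0`.
theorem rpow_pow_choose_le_vandermondeRpow {a R : ℝ} (ha : 0 ≤ a) {z : Fin n → E}
    (hz : Function.Injective z) (hR : ∀ i j, ‖z i - z j‖ ≤ R) :
    (R ^ (-a)) ^ n.choose 2 ≤ vandermondeRpow a z := by
  rw [← Fin.sum_card_Ioi, ← prod_pow_eq_pow_sum]
  have hR0 : ∀ i, 0 ≤ R ^ (-a) := fun i => Real.rpow_nonneg ((norm_nonneg _).trans (hR i i)) _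
  refine prod_le_prod (fun i _ => pow_nonneg (hR0 i) _) fun i _ => ?_
  rw [← prod_const]
  refine prod_le_prod (fun _ _ => hR0 i) fun j hj => ?_
  have hij : 0 < ‖z i - z j‖ := norm_pos_iff.mpr (sub_ne_zero.mpr (hz.ne (mem_Ioi.mp hj).ne))
  exact Real.rpow_le_rpow_of_nonpos hij (hR i j) (neg_nonpos.mpr ha)

end Weights

section Shear

variable {G : Type*} [AddGroup G] [MeasurableSpace G] [MeasurableAdd₂ G] [MeasurableNeg G] {n : ℕ}

def shear (j : Fin (n + 1)) : G × (Fin n → G) ≃ᵐ (Fin (n + 1) → G) :=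
  MeasurableEquiv.trans
    { toFun := fun p => (p.1, fun i => p.1 + p.2 i)
      invFun := fun p => (p.1, fun i => -p.1 + p.2 i)
      left_inv := fun p => by simp
      right_inv := fun p => by simp
      measurable_toFun := measurable_fst.prodMk (by fun_prop)
      measurable_invFun := measurable_fst.prodMk (by fun_prop) }
    (MeasurableEquiv.piFinSuccAbove (fun _ => G) j).symm

@[simp]
theorem shear_apply_self (j : Fin (n + 1)) (p : G × (Fin n → G)) : shear j p j = p.1 := by
  simp [shear, MeasurableEquiv.piFinSuccAbove_symm_apply]

@[simp]
theorem shear_apply_succAbove (j : Fin (n + 1)) (p : G × (Fin n → G)) (i : Fin n) :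
    shear j p (j.succAbove i) = p.1 + p.2 i := by
  simp [shear, MeasurableEquiv.piFinSuccAbove_symm_apply]

theorem measurePreserving_shear (μ : Measure G) [SigmaFinite μ] [μ.IsAddLeftInvariant]
    (j : Fin (n + 1)) :
    MeasurePreserving (shear j) (μ.prod (Measure.pi fun _ => μ)) (Measure.pi fun _ => μ) := by
  refine (measurePreserving_piFinSuccAbove (fun _ => μ) j).symm.comp ?_
  refine MeasurePreserving.skew_product (μd := Measure.pi fun _ => μ) (MeasurePreserving.id _)
    (by fun_prop) (.of_forall fun w => map_add_left_eq_self _ (fun _ => w))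

end Shear

section ShearBounds

variable {E : Type*} [NormedAddCommGroup E] [MeasurableSpace E] [MeasurableAdd₂ E]
  [MeasurableNeg E] {n : ℕ}

theorem norm_shear_sub_le (j i : Fin (n + 1)) (p : E × (Fin n → E)) :
    ‖shear j p i - shear j p j‖ ≤ ‖p.2‖ := by
  induction i using Fin.succAboveCases j with
  | x => simp
  | p i => simpa using norm_le_pi_norm p.2 i

theorem norm_shear_sub_shear_le (j i i' : Fin (n + 1)) (p : E × (Fin n → E)) :
    ‖shear j p i - shear j p i'‖ ≤ 2 * ‖p.2‖ := by
  have := norm_sub_le_norm_sub_add_norm_sub (shear j p i) (shear j p j) (shear j p i')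
  rw [norm_sub_rev (shear j p j)] at this
  linarith [norm_shear_sub_le j i p, norm_shear_sub_le j i' p]

theorem norm_shear_le (j i : Fin (n + 1)) (p : E × (Fin n → E)) :
    ‖shear j p i‖ ≤ ‖p.1‖ + ‖p.2‖ := by
  calc ‖shear j p i‖ = ‖shear j p j + (shear j p i - shear j p j)‖ := by rw [add_sub_cancel]
    _ ≤ ‖p.1‖ + ‖p.2‖ := by
      grw [norm_add_le, norm_shear_sub_le, shear_apply_self]

end ShearBounds

theorem integrableOn_ball_rpow_neg_norm_iff {E : Type*} [NormedAddCommGroup E]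
    [NormedSpace ℝ E] [FiniteDimensional ℝ E] [MeasurableSpace E] [BorelSpace E] [Nontrivial E]
    (μ : Measure E) [μ.IsAddHaarMeasure] {r : ℝ} (hr : 0 < r) (s : ℝ) :
    IntegrableOn (fun x : E => ‖x‖ ^ (-s)) (ball 0 r) μ ↔ s < Module.finrank ℝ E := by
  have hd : 1 ≤ Module.finrank ℝ E := Module.finrank_pos
  rw [integrableOn_fun_norm_addHaar μ (f := fun y => y ^ (-s)),
    integrableOn_congr_fun (g := fun y : ℝ => y ^ ((Module.finrank ℝ E : ℝ) - 1 - s)) _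
      measurableSet_Ioo, intervalIntegral.integrableOn_Ioo_rpow_iff hr]
  · constructor <;> intro h <;> linarith
  · rintro y ⟨hy, -⟩
    dsimp only
    rw [smul_eq_mul, ← Real.rpow_natCast, ← Real.rpow_add hy, Nat.cast_sub hd]
    ring_nf

theorem ae_injective {ι E : Type*} [Fintype ι] [NormedAddCommGroup E] [NormedSpace ℝ E]
    [FiniteDimensional ℝ E] [MeasurableSpace E] [BorelSpace E] [Nontrivial E]
    (μ : Measure (ι → E)) [μ.IsAddHaarMeasure] :
    ∀ᵐ z ∂μ, Function.Injective z := by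
  classical
  have hne : ∀ i j, i ≠ j → ∀ᵐ z ∂μ, z i ≠ z j := by
    intro i j hij
    obtain ⟨x, hx⟩ := exists_ne (0 : E)
    let L : (ι → E) →ₗ[ℝ] E := LinearMap.proj (R := ℝ) (φ := fun _ => E) i - LinearMap.proj j
    have hL : LinearMap.ker L ≠ ⊤ := fun htop => hx <| by
      simpa [L, hij.symm] using (htop ▸ Submodule.mem_top : Pi.single i x ∈ LinearMap.ker L)
    refine measure_mono_null (fun z hz => ?_) (Measure.addHaar_submodule μ _ hL)
    simpa [L, sub_eq_zero] using hz
  simp only [Function.Injective, ae_all_iff]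
  intro i j
  by_cases hij : i = j
  · exact .of_forall fun _ _ => hij
  · filter_upwards [hne i j hij] with z hz h using absurd h hz

section Integrability

variable {E : Type*} [NormedAddCommGroup E] [NormedSpace ℝ E] [FiniteDimensional ℝ E]
  [MeasureSpace E] [BorelSpace E] [(volume : Measure E).IsAddHaarMeasure] {n : ℕ}

theorem integrableOn_pi_ball_prod_sub_succAbove {φ : E → ℝ} {r : ℝ}
    (hφ : IntegrableOn φ (ball 0 (2 * r))) (j : Fin (n + 1)) :
    IntegrableOn (fun z : Fin (n + 1) → E => ∏ i : Fin n, φ (z (j.succAbove i) - z j))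
      (univ.pi fun _ => ball 0 r) := by
  refine ((measurePreserving_shear volume j).integrableOn_comp_preimage
    (shear j).measurableEmbedding).mp ?_
  have hsub : shear j ⁻¹' (univ.pi fun _ => ball 0 r) ⊆
      ball (0 : E) r ×ˢ univ.pi fun _ => ball 0 (2 * r) := by
    intro p hp
    simp only [Set.mem_preimage, mem_univ_pi, mem_ball_zero_iff] at hp
    refine ⟨by simpa using hp j, mem_univ_pi.mpr fun i => mem_ball_zero_iff.mpr ?_⟩
    calc ‖p.2 i‖ = ‖shear j p (j.succAbove i) - shear j p j‖ := by simp
      _ ≤ ‖shear j p (j.succAbove i)‖ + ‖shear j p j‖ := norm_sub_le _ _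
      _ < 2 * r := by linarith [hp (j.succAbove i), hp j]
  refine IntegrableOn.mono_set ?_ hsub
  have : IsFiniteMeasure ((volume : Measure E).restrict (ball 0 r)) :=
    isFiniteMeasure_restrict.mpr measure_ball_lt_top.ne
  simp only [IntegrableOn, Function.comp_def, shear_apply_succAbove, shear_apply_self,
    add_sub_cancel_left, ← Measure.prod_restrict, Measure.restrict_pi_pi]
  exact (Integrable.fintype_prod fun _ => hφ).comp_snd _

theorem integrableOn_vandermondeRpow [Nontrivial E] {a r : ℝ}
    (ha : a * (n + 1) < 2 * Module.finrank ℝ E) (hr : 0 < r) :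
    IntegrableOn (vandermondeRpow a) (univ.pi fun _ : Fin (n + 1) => ball (0 : E) r) := by
  have hφ : IntegrableOn (fun x : E => ‖x‖ ^ (-(a * (n + 1) / 2))) (ball 0 (2 * r)) :=
    (integrableOn_ball_rpow_neg_norm_iff volume (by positivity) _).mpr (by linarith)
  refine Integrable.mono' (integrable_finsetSum univ fun j _ =>
    (integrableOn_pi_ball_prod_sub_succAbove hφ j).const_mul (n + 1 : ℝ)⁻¹)
    (by unfold vandermondeRpow; exact Measurable.aestronglyMeasurable (by fun_prop))
    (.of_forall fun z => ?_)
  rw [Real.norm_of_nonneg (vandermondeRpow_nonneg a z)]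
  exact vandermondeRpow_le_sum_starRpow a z

theorem ae_rpow_le_vandermondeRpow_shear [Nontrivial E] {a : ℝ} (ha : 0 ≤ a) :
    ∀ᵐ p : E × (Fin n → E), (2 : ℝ) ^ (-(a * (n + 1).choose 2)) * ‖p.2‖ ^ (-(a * (n + 1).choose 2))
      ≤ vandermondeRpow a (shear 0 p) := by
  filter_upwards [(measurePreserving_shear volume 0).quasiMeasurePreserving.ae
    (ae_injective (volume : Measure (Fin (n + 1) → E)))] with p hp
  have := rpow_pow_choose_le_vandermondeRpow ha hp (norm_shear_sub_shear_le 0 · · p)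
  rwa [← Real.rpow_natCast, ← Real.rpow_mul (by positivity), Real.mul_rpow (by positivity)
    (by positivity), neg_mul] at this

theorem integrableOn_ball_rpow_of_integrableOn_vandermondeRpow [Nontrivial E] {a ε : ℝ}
    (ha : 0 ≤ a) (hε : 0 < ε)
    (h : IntegrableOn (vandermondeRpow a) (ball (0 : Fin (n + 1) → E) ε)) :
    IntegrableOn (fun v : Fin n → E => ‖v‖ ^ (-(a * (n + 1).choose 2))) (ball 0 (ε / 2)) := by
  set s := a * (n + 1).choose 2
  have hsub : ball (0 : E) (ε / 2) ×ˢ ball (0 : Fin n → E) (ε / 2) ⊆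
      shear 0 ⁻¹' ball (0 : Fin (n + 1) → E) ε := by
    rintro p ⟨hp₁, hp₂⟩
    rw [mem_ball_zero_iff] at hp₁ hp₂
    rw [Set.mem_preimage, mem_ball_zero_iff, pi_norm_lt_iff hε]
    exact fun i => (norm_shear_le 0 i p).trans_lt (by linarith)
  have hpull : IntegrableOn (vandermondeRpow a ∘ shear 0)
      (ball (0 : E) (ε / 2) ×ˢ ball (0 : Fin n → E) (ε / 2)) :=
    (((measurePreserving_shear volume 0).integrableOn_comp_preimage
      (shear 0).measurableEmbedding).mpr h).mono_set hsub
  have hint : IntegrableOn (fun p : E × (Fin n → E) => (2 : ℝ) ^ (-s) * ‖p.2‖ ^ (-s))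
      (ball (0 : E) (ε / 2) ×ˢ ball (0 : Fin n → E) (ε / 2)) :=
    hpull.mono' (Measurable.aestronglyMeasurable (by fun_prop)) <| ae_restrict_of_ae <| by
      filter_upwards [ae_rpow_le_vandermondeRpow_shear ha] with p hp
      rwa [Real.norm_of_nonneg (by positivity)]
  have hA : (volume : Measure E).restrict (ball 0 (ε / 2)) ≠ 0 := by
    rw [Ne, Measure.restrict_eq_zero]
    exact (measure_ball_pos _ _ (half_pos hε)).ne'
  rw [IntegrableOn, Measure.volume_eq_prod, ← Measure.prod_restrict] at hint
  exact (integrable_const_mul_iff (by positivity : (0 : ℝ) < 2 ^ (-s)).ne'.isUnit _).mp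
    (Integrable.of_comp_snd (f := fun v : Fin n → E => 2 ^ (-s) * ‖v‖ ^ (-s)) hint hA)

theorem lt_of_integrableOn_vandermondeRpow [Nontrivial E] (hn : 1 ≤ n) {a ε : ℝ} (ha : 0 ≤ a)
    (hε : 0 < ε) (h : IntegrableOn (vandermondeRpow a) (ball (0 : Fin (n + 1) → E) ε)) :
    a * (n + 1) < 2 * Module.finrank ℝ E := by
  have : NeZero n := ⟨by omega⟩
  have hs := (integrableOn_ball_rpow_neg_norm_iff volume (half_pos hε) _).mp
    (integrableOn_ball_rpow_of_integrableOn_vandermondeRpow ha hε h)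
  rw [Module.finrank_pi_fintype] at hs
  simp only [Nat.cast_choose_two, sum_const, card_univ, Fintype.card_fin, smul_eq_mul] at hs
  push_cast at hs
  have hn' : (0 : ℝ) < n := by exact_mod_cast hn
  nlinarith

theorem exists_integrableOn_vandermondeRpow_iff [Nontrivial E] (hn : 1 ≤ n) (a : ℝ) :
    (∃ U ∈ 𝓝 (0 : Fin (n + 1) → E), IntegrableOn (vandermondeRpow a) U) ↔
      a * (n + 1) < 2 * Module.finrank ℝ E := by
  refine ⟨fun ⟨U, hU, hint⟩ => ?_, fun ha => ⟨_, set_pi_mem_nhds finite_univ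
    fun _ _ => ball_mem_nhds 0 one_pos, integrableOn_vandermondeRpow ha one_pos⟩⟩
  rcases lt_or_ge a 0 with ha | ha
  · have : (0 : ℝ) < Module.finrank ℝ E := by exact_mod_cast Module.finrank_pos
    nlinarith [(n.cast_nonneg : (0 : ℝ) ≤ n)]
  obtain ⟨ε, hε, hball⟩ := Metric.mem_nhds_iff.mp hU
  exact lt_of_integrableOn_vandermondeRpow hn ha hε (hint.mono_set hball)

end Integrability

theorem berman_gibbs_P1_general (k : ℕ) (hk : 1 ≤ k) (c : ℝ) :
    (∃ U ∈ nhds (0 : Fin (2 * k + 1) → ℂ), IntegrableOn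
        (fun z : Fin (2 * k + 1) → ℂ =>
          ∏ i : Fin (2 * k + 1), ∏ j ∈ Finset.Ioi i,
            ‖z i - z j‖ ^ (-(2 * c / (k : ℝ))))
        U volume) ↔ c < 2 * (k : ℝ) / (2 * (k : ℝ) + 1) := by
  have hk' : (0 : ℝ) < k := by exact_mod_cast hk
  refine (exists_integrableOn_vandermondeRpow_iff (E := ℂ) (by omega) _).trans ?_
  rw [Complex.finrank_real_complex, lt_div_iff₀ (by positivity), div_mul_eq_mul_div,
    div_lt_iff₀ hk']
  push_cast
  constructor <;> intro h <;> linarith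

/-- The Berman–Gibbs threshold computation for `P^1`: with `N = 2k + 1`, the function
`z ↦ ∏_{i<j} |z_i - z_j|^{-2c/k}` on `ℂ^N` is integrable near the origin iff
`c < 2k/(2k+1)`; i.e. the log canonical threshold of `(1/k) D_k` along the diagonal is
`2k/(2k+1)`, so `γ(P^1) = 1`. -/
theorem berman_gibbs_P1 (k : ℕ) (hk : 1 ≤ k) (c : ℝ) (hc : 0 < c) :
    (∃ U ∈ nhds (0 : Fin (2 * k + 1) → ℂ), IntegrableOn
        (fun z : Fin (2 * k + 1) → ℂ =>
          ∏ i : Fin (2 * k + 1), ∏ j ∈ Finset.Ioi i,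
            ‖z i - z j‖ ^ (-(2 * c / (k : ℝ))))
        U volume) ↔ c < 2 * (k : ℝ) / (2 * (k : ℝ) + 1) :=
  berman_gibbs_P1_general k hk c
end
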